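/- arXiv:1611.05342 — 3 statements merged into one kernel-verified Lean document; each statement's English description precedes it below -/
import Mathlib

section
/- Every monotone submodular function v : 2^[k] → ℝ≥0 with v(∅)=0 is XOS: v equals the pointwise maximum of the finite collection of additive functions {a_T}_{T⊆[k]} where for each ordering of T, a_T assigns to each element its marginal contribution. -/
/-!
Order the ground set and, for each `T`, let `a_T` give `j ∈ T` its marginal contribution
`v {i ∈ T | i ≤ j} - v {i ∈ T | i < j}`. Monotonicity makes these weights nonnegative, the sum
over `T` telescopes to `v T`, and by submodularity the marginal of `j` with respect to a
subset of its predecessors in `T` is at least its marginal in `T`; hence `a_T S ≤ v (S ∩ T) ≤ v S`.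
So `v S` is the maximum of the `a_T S`, attained at `T = S`.
-/

def IsAdditive (k : ℕ) (v : Finset (Fin k) → ℝ) : Prop :=
  ∃ α : Fin k → ℝ, (∀ j, 0 ≤ α j) ∧ ∀ S, v S = ∑ j ∈ S, α j

def IsXOS (k : ℕ) (v : Finset (Fin k) → ℝ) : Prop :=
  ∃ (d : ℕ) (a : Fin (d + 1) → Finset (Fin k) → ℝ),
    (∀ i, IsAdditive k (a i)) ∧
    ∀ S, v S = Finset.univ.sup' ⟨0, Finset.mem_univ 0⟩ (fun i => a i S)

def IsSubmodular (k : ℕ) (v : Finset (Fin k) → ℝ) : Prop :=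
  ∀ S T : Finset (Fin k), S ⊆ T → ∀ x ∉ T,
    v (insert x T) - v T ≤ v (insert x S) - v S

open Finset

section Marginal

variable {α : Type*} [LinearOrder α] (v : Finset α → ℝ)

noncomputable def marginal (T : Finset α) (j : α) : ℝ :=
  v {i ∈ T | i ≤ j} - v {i ∈ T | i < j}

variable {v}

lemma marginal_nonneg (hmono : Monotone v) (T : Finset α) (j : α) : 0 ≤ marginal v T j :=
  sub_nonneg.mpr <| hmono <| monotone_filter_right T fun _ _ => le_of_lt

lemma marginal_eq_zero_of_notMem {T : Finset α} {j : α} (hj : j ∉ T) : marginal v T j = 0 := by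
  have : {i ∈ T | i ≤ j} = {i ∈ T | i < j} :=
    filter_congr fun i hi => ⟨fun h => h.lt_of_ne (ne_of_mem_of_not_mem hi hj), le_of_lt⟩
  rw [marginal, this, sub_self]

lemma marginal_insert_of_lt {s : Finset α} {a j : α} (hja : j < a) :
    marginal v (insert a s) j = marginal v s j := by
  simp [marginal, filter_insert, hja.not_ge, hja.not_gt]

lemma marginal_insert_self {s : Finset α} {a : α} (hs : ∀ x ∈ s, x < a) :
    marginal v (insert a s) a = v (insert a s) - v s := by
  have hle : {i ∈ s | i ≤ a} = s := filter_true_of_mem fun x hx => (hs x hx).le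
  have hlt : {i ∈ s | i < a} = s := filter_true_of_mem hs
  simp [marginal, filter_insert, hle, hlt]

lemma sum_marginal_self (hzero : v ∅ = 0) (T : Finset α) : ∑ j ∈ T, marginal v T j = v T := by
  induction T using Finset.induction_on_max with
  | empty => simp [hzero]
  | insert a s hs ih =>
    have ha : a ∉ s := fun h => (hs a h).false
    rw [sum_insert ha, marginal_insert_self hs,
      sum_congr rfl fun j hj => marginal_insert_of_lt (hs j hj), ih, sub_add_cancel]

lemma marginal_le_of_subset
    (hsubmod : ∀ S T : Finset α, S ⊆ T → ∀ x ∉ T, v (insert x T) - v T ≤ v (insert x S) - v S)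
    {S T : Finset α} {a : α} (ha : a ∈ T) (hS : S ⊆ {i ∈ T | i < a}) :
    marginal v T a ≤ v (insert a S) - v S := by
  have hins : insert a {i ∈ T | i < a} = {i ∈ T | i ≤ a} := by
    ext x
    simp only [mem_insert, mem_filter]
    grind
  have := hsubmod S _ hS a (by simp)
  rwa [hins] at this

lemma sum_marginal_le
    (hsubmod : ∀ S T : Finset α, S ⊆ T → ∀ x ∉ T, v (insert x T) - v T ≤ v (insert x S) - v S)
    (hzero : v ∅ = 0) (T S : Finset α) : ∑ j ∈ S, marginal v T j ≤ v (S ∩ T) := by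
  induction S using Finset.induction_on_max with
  | empty => simp [hzero]
  | insert a s hs ih =>
    have ha : a ∉ s := fun h => (hs a h).false
    rw [sum_insert ha]
    by_cases haT : a ∈ T
    · have hsub : s ∩ T ⊆ {i ∈ T | i < a} := fun x hx =>
        mem_filter.mpr ⟨(mem_inter.mp hx).2, hs x (mem_inter.mp hx).1⟩
      have := marginal_le_of_subset hsubmod haT hsub
      rw [insert_inter_of_mem haT]
      linarith
    · rw [marginal_eq_zero_of_notMem haT, insert_inter_of_notMem haT, zero_add]
      exact ih

end Marginal

lemma isXOS_of_isGreatest {k : ℕ} {v : Finset (Fin k) → ℝ} {ι : Type*} [Fintype ι] [Nonempty ι]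
    (a : ι → Finset (Fin k) → ℝ) (hadd : ∀ i, IsAdditive k (a i))
    (hmax : ∀ S, IsGreatest (Set.range fun i => a i S) (v S)) : IsXOS k v := by
  have hcard : Fintype.card ι - 1 + 1 = Fintype.card ι := Nat.sub_add_cancel Fintype.card_pos
  let e : Fin (Fintype.card ι - 1 + 1) ≃ ι := (finCongr hcard).trans (Fintype.equivFin ι).symm
  refine ⟨_, fun i => a (e i), fun i => hadd (e i), fun S => le_antisymm ?_ ?_⟩
  · obtain ⟨i, hi⟩ := (hmax S).1
    rw [← hi, ← e.apply_symm_apply i]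
    exact le_sup' (fun j => a (e j) S) (mem_univ _)
  · exact sup'_le _ _ fun i _ => (hmax S).2 ⟨e i, rfl⟩

theorem monotone_submodular_isXOS_general (k : ℕ) (v : Finset (Fin k) → ℝ)
    (hmono : ∀ S T : Finset (Fin k), S ⊆ T → v S ≤ v T)
    (hsubmod : IsSubmodular k v)
    (hzero : v ∅ = 0) :
    IsXOS k v := by
  refine isXOS_of_isGreatest (fun T S => ∑ j ∈ S, marginal v T j)
    (fun T => ⟨marginal v T, marginal_nonneg hmono T, fun _ => rfl⟩) fun S => ?_
  refine ⟨⟨S, sum_marginal_self hzero S⟩, ?_⟩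
  rintro _ ⟨T, rfl⟩
  exact (sum_marginal_le hsubmod hzero T S).trans (hmono _ _ inter_subset_left)

/-- every monotone submodular function with `v ∅ = 0` is XOS. -/
theorem monotone_submodular_isXOS (k : ℕ) (v : Finset (Fin k) → ℝ)
    (hnonneg : ∀ S, 0 ≤ v S)
    (hmono : ∀ S T : Finset (Fin k), S ⊆ T → v S ≤ v T)
    (hsubmod : IsSubmodular k v)
    (hzero : v ∅ = 0) :
    IsXOS k v :=
  monotone_submodular_isXOS_general k v hmono hsubmod hzero
end

section
/- Let v : 2^[k] → ℝ≥0 be subadditive, X ⊆ [k] partitioned into X_1,...,X_m, p ∈ ℝ^k a price vector, and z_1,...,z_m independent Bernoulli(1/2) variables with X(z) := ⋃_{j : z_j=1} X_j. Then E_z[ v(X(z)) − Σ_{ℓ∈X(z)} p_ℓ ] ≥ (1/2)·( v(X) − Σ_{ℓ∈X} p_ℓ ). -/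
/-!
Write `u S = v S - ∑ ℓ ∈ S, p ℓ`. For every `z`, the selections `X(z)` and `X(!z)` partition `X`,
so subadditivity of `v` and additivity of the prices give `u X ≤ u (X(z)) + u (X(!z))`. Since
`z ↦ !z` is a bijection of `Fin m → Bool`, summing over all `z` gives
`2 ^ m * u X ≤ 2 * ∑ z, u (X(z))`.
-/

open Finset Function

section SelectedUnion

variable {ι α : Type*} [Fintype ι] [DecidableEq α]

theorem biUnion_ite_union_biUnion_ite_not (A : ι → Finset α) (z : ι → Bool) :
    univ.biUnion (fun j => if z j then A j else ∅) ∪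
        univ.biUnion (fun j => if !z j then A j else ∅) = univ.biUnion A := by
  ext x
  simp only [mem_union, mem_biUnion, mem_univ, true_and]
  grind

theorem disjoint_biUnion_ite_biUnion_ite_not {A : ι → Finset α} (hA : Pairwise (Disjoint on A))
    (z : ι → Bool) :
    Disjoint (univ.biUnion fun j => if z j then A j else ∅)
      (univ.biUnion fun j => if !z j then A j else ∅) := by
  simp only [disjoint_biUnion_left, disjoint_biUnion_right, mem_univ, forall_const]
  intro i j
  rcases eq_or_ne j i with rfl | hji
  · cases z j <;> simp
  · split_ifs <;> simp [hA hji]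

end SelectedUnion

theorem sub_sum_union_le_of_disjoint {α : Type*} [DecidableEq α] {v : Finset α → ℝ}
    (hsub : ∀ S T, v (S ∪ T) ≤ v S + v T) (p : α → ℝ) {S T : Finset α} (hST : Disjoint S T) :
    v (S ∪ T) - ∑ ℓ ∈ S ∪ T, p ℓ ≤ (v S - ∑ ℓ ∈ S, p ℓ) + (v T - ∑ ℓ ∈ T, p ℓ) := by
  rw [sum_union hST]
  linarith [hsub S T]

theorem card_mul_le_two_mul_sum_of_le_add_comp {β : Type*} [Fintype β] {σ : β → β}
    (hσ : Involutive σ) (f : β → ℝ) {c : ℝ} (h : ∀ b, c ≤ f b + f (σ b)) :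
    Fintype.card β * c ≤ 2 * ∑ b, f b := by
  calc Fintype.card β * c = ∑ _ : β, c := by simp
    _ ≤ ∑ b, (f b + f (σ b)) := sum_le_sum fun b _ => h b
    _ = 2 * ∑ b, f b := by rw [sum_add_distrib, hσ.bijective.sum_comp f]; ring

theorem subadditive_random_half_utility_general (k m : ℕ) (v : Finset (Fin k) → ℝ)
    (hsub : ∀ S T : Finset (Fin k), v (S ∪ T) ≤ v S + v T)
    (p : Fin k → ℝ)
    (X : Finset (Fin k)) (Xpart : Fin m → Finset (Fin k))
    (hdisj : ∀ j j' : Fin m, j ≠ j' → Disjoint (Xpart j) (Xpart j'))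
    (hcover : Finset.univ.biUnion Xpart = X) :
    (1 / 2 ^ m : ℝ) *
        ∑ z : Fin m → Bool,
          (v (Finset.univ.biUnion fun j => if z j then Xpart j else ∅) -
            ∑ ℓ ∈ Finset.univ.biUnion fun j => if z j then Xpart j else ∅, p ℓ) ≥
      (1 / 2) * (v X - ∑ ℓ ∈ X, p ℓ) := by
  have hsplit (z : Fin m → Bool) := by
    have h := sub_sum_union_le_of_disjoint hsub p (disjoint_biUnion_ite_biUnion_ite_not hdisj z)
    rwa [biUnion_ite_union_biUnion_ite_not, hcover] at h
  have hσ : Involutive fun (z : Fin m → Bool) j => !z j := fun z => by simp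
  have hsum := card_mul_le_two_mul_sum_of_le_add_comp hσ _ hsplit
  simp only [Fintype.card_fun, Fintype.card_bool, Fintype.card_fin, Nat.cast_pow,
    Nat.cast_ofNat] at hsum
  field_simp
  linarith

/-- subadditive valuation with item prices under random
availability: `E_z[v(X(z)) − Σ_{ℓ∈X(z)} p_ℓ] ≥ (1/2)(v(X) − Σ_{ℓ∈X} p_ℓ)`. -/
theorem subadditive_random_half_utility (k m : ℕ) (v : Finset (Fin k) → ℝ)
    (hnonneg : ∀ S, 0 ≤ v S)
    (hsub : ∀ S T : Finset (Fin k), v (S ∪ T) ≤ v S + v T)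
    (p : Fin k → ℝ)
    (X : Finset (Fin k)) (Xpart : Fin m → Finset (Fin k))
    (hdisj : ∀ j j' : Fin m, j ≠ j' → Disjoint (Xpart j) (Xpart j'))
    (hcover : Finset.univ.biUnion Xpart = X) :
    (1 / 2 ^ m : ℝ) *
        ∑ z : Fin m → Bool,
          (v (Finset.univ.biUnion fun j => if z j then Xpart j else ∅) -
            ∑ ℓ ∈ Finset.univ.biUnion fun j => if z j then Xpart j else ∅, p ℓ) ≥
      (1 / 2) * (v X - ∑ ℓ ∈ X, p ℓ) :=
  subadditive_random_half_utility_general k m v hsub p X Xpart hdisj hcover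
end

section
/- Let n ≥ 3 agents have subadditive valuations v_1,...,v_n : 2^[k] → ℝ≥0, let (X*_1,...,X*_n) be a partition of [k] maximizing Σ_i v_i(X*_i), and let (I_1,...,I_n) be any partition of [k] (the initial endowments). For each agent i, removing a uniformly random other agent j and her items yields allocation X*_i \ I_j. Then (1/n)·Σ_{i∈[n]} Σ_{j∈[n]\{i\}} v_j(X*_j \ I_i) ≥ ((n−1)/(2n))·Σ_{i∈[n]} v_i(X*_i). -/
/-!
Fix an agent `j`. For two distinct other agents `i ≠ i'` the endowments `I i` and `I i'` are
disjoint, so `X*_j \ I i` and `X*_j \ I i'` cover `X*_j`, and subadditivity gives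
`v_j(X*_j) ≤ v_j(X*_j \ I i) + v_j(X*_j \ I i')`. Averaging this over ordered pairs of the `n - 1`
agents other than `j` bounds their mean `v_j(X*_j \ I i)` below by `v_j(X*_j) / 2`; summing over
`j` and exchanging the order of summation gives the claim.
-/

open Finset

theorem apply_le_apply_sdiff_add_apply_sdiff {α M : Type*} [DecidableEq α] [Add M] [LE M]
    {f : Finset α → M} (hf : ∀ s t, f (s ∪ t) ≤ f s + f t) (X : Finset α) {A B : Finset α}
    (hAB : Disjoint A B) : f X ≤ f (X \ A) + f (X \ B) := by
  have hcover : X \ A ∪ X \ B = X := by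
    rw [← sdiff_inter_distrib_right, disjoint_iff_inter_eq_empty.mp hAB, sdiff_empty]
  simpa only [hcover] using hf (X \ A) (X \ B)

/-- Each of the `#S * (#S - 1)` ordered pairs of distinct indices contributes `c`, and each
`g i` occurs in `2 * (#S - 1)` of them. -/
theorem card_mul_le_two_mul_sum_of_le_add {ι : Type*} [DecidableEq ι] {S : Finset ι}
    {g : ι → ℝ} {c : ℝ} (hS : 2 ≤ #S) (h : ∀ i ∈ S, ∀ j ∈ S, i ≠ j → c ≤ g i + g j) :
    #S * c ≤ 2 * ∑ i ∈ S, g i := by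
  have hcard_erase : ∀ i ∈ S, (#(S.erase i) : ℝ) = #S - 1 := fun i hi => by
    rw [card_erase_of_mem hi, Nat.cast_sub (by omega), Nat.cast_one]
  have hpairs : ∑ i ∈ S, ∑ j ∈ S.erase i, (g i + g j) = 2 * (#S - 1) * ∑ i ∈ S, g i := by
    have hrow : ∀ i ∈ S, ∑ j ∈ S.erase i, (g i + g j) =
        (#S - 1) * g i + (∑ j ∈ S, g j - g i) := fun i hi => by
      rw [sum_add_distrib, sum_const, nsmul_eq_mul, hcard_erase i hi, sum_erase_eq_sub hi]
    rw [sum_congr rfl hrow, sum_add_distrib, sum_sub_distrib, ← mul_sum, sum_const,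
      nsmul_eq_mul]
    ring
  have hlower : #S * ((#S - 1) * c) ≤ 2 * (#S - 1) * ∑ i ∈ S, g i := by
    rw [← hpairs, ← nsmul_eq_mul, ← sum_const]
    refine sum_le_sum fun i hi => ?_
    rw [← hcard_erase i hi, ← nsmul_eq_mul, ← sum_const]
    exact sum_le_sum fun j hj => h i hi j (mem_of_mem_erase hj) (ne_of_mem_erase hj).symm
  have hpos : (0 : ℝ) < #S - 1 := by
    have : (2 : ℝ) ≤ #S := by exact_mod_cast hS
    linarith
  nlinarith

theorem sum_sum_erase_comm {ι M : Type*} [Fintype ι] [DecidableEq ι] [AddCommGroup M]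
    (f : ι → ι → M) : ∑ i, ∑ j ∈ univ.erase i, f i j = ∑ j, ∑ i ∈ univ.erase j, f i j := by
  simp only [sum_erase_eq_sub (mem_univ _), sum_sub_distrib]
  rw [sum_comm]

theorem random_removal_welfare_general (n k : ℕ) (hn : 3 ≤ n)
    (v : Fin n → Finset (Fin k) → ℝ)
    (hsub : ∀ i, ∀ S T : Finset (Fin k), v i (S ∪ T) ≤ v i S + v i T)
    (Xstar : Fin n → Finset (Fin k))
    (I : Fin n → Finset (Fin k))
    (hIdisj : ∀ i i' : Fin n, i ≠ i' → Disjoint (I i) (I i')) :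
    (1 / n : ℝ) * ∑ i, ∑ j ∈ Finset.univ.erase i, v j (Xstar j \ I i) ≥
      ((n - 1 : ℝ) / (2 * n)) * ∑ i, v i (Xstar i) := by
  have hagent : ∀ j, ((n : ℝ) - 1) * v j (Xstar j) ≤
      2 * ∑ i ∈ univ.erase j, v j (Xstar j \ I i) := fun j => by
    have hcard : #(univ.erase j) = n - 1 := by simp
    have := card_mul_le_two_mul_sum_of_le_add (S := univ.erase j) (by omega) fun i _ i' _ hii' =>
      apply_le_apply_sdiff_add_apply_sdiff (hsub j) (Xstar j) (hIdisj i i' hii')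
    rwa [hcard, Nat.cast_sub (by omega), Nat.cast_one] at this
  have hsum : ((n : ℝ) - 1) * ∑ j, v j (Xstar j) ≤
      2 * ∑ j, ∑ i ∈ univ.erase j, v j (Xstar j \ I i) := by
    rw [mul_sum, mul_sum]
    exact sum_le_sum fun j _ => hagent j
  rw [sum_sum_erase_comm fun i j => v j (Xstar j \ I i), ge_iff_le]
  calc ((n - 1 : ℝ) / (2 * n)) * ∑ j, v j (Xstar j)
      = (1 / n : ℝ) * (((n : ℝ) - 1) * (∑ j, v j (Xstar j)) / 2) := by ring
    _ ≤ (1 / n : ℝ) * ∑ j, ∑ i ∈ univ.erase j, v j (Xstar j \ I i) := by gcongr; linarith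

/-- random-agent-removal welfare bound. With `n ≥ 3` subadditive
agents, an optimal partition `X*` of the items and any partition `I` of initial
endowments, `(1/n)·Σ_i Σ_{j ≠ i} v_j(X*_j \ I_i) ≥ ((n−1)/(2n))·Σ_i v_i(X*_i)`. -/
theorem random_removal_welfare (n k : ℕ) (hn : 3 ≤ n)
    (v : Fin n → Finset (Fin k) → ℝ)
    (hnonneg : ∀ i S, 0 ≤ v i S)
    (hsub : ∀ i, ∀ S T : Finset (Fin k), v i (S ∪ T) ≤ v i S + v i T)
    (Xstar : Fin n → Finset (Fin k))
    (hXdisj : ∀ i i' : Fin n, i ≠ i' → Disjoint (Xstar i) (Xstar i'))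
    (hXcover : Finset.univ.biUnion Xstar = Finset.univ)
    (hXopt : ∀ Y : Fin n → Finset (Fin k),
      (∀ i i' : Fin n, i ≠ i' → Disjoint (Y i) (Y i')) →
      Finset.univ.biUnion Y = Finset.univ →
      ∑ i, v i (Y i) ≤ ∑ i, v i (Xstar i))
    (I : Fin n → Finset (Fin k))
    (hIdisj : ∀ i i' : Fin n, i ≠ i' → Disjoint (I i) (I i'))
    (hIcover : Finset.univ.biUnion I = Finset.univ) :
    (1 / n : ℝ) * ∑ i, ∑ j ∈ Finset.univ.erase i, v j (Xstar j \ I i) ≥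
      ((n - 1 : ℝ) / (2 * n)) * ∑ i, v i (Xstar i) :=
  random_removal_welfare_general n k hn v hsub Xstar I hIdisj
end
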